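/- Classification of lattice points: the thirteen sets P, A₁, A₂, A₃, A₄, A₅, A₆, B₁, B₂, B₃, B₄, B₅, B₆ are pairwise disjoint and their union is all of ℤ[ζ]. -/
import Mathlib


open MeasureTheory Complex
open scoped Classical

noncomputable section

namespace Parisian

/-- The primitive cube root of unity `ζ = (−1 + √3·i)/2`. -/
def zeta : ℂ := (-1 + Real.sqrt 3 * Complex.I) / 2

/-- The lattice `ℤ[ζ] = {a + bζ : a, b ∈ ℤ}` as a subset of `ℂ`. -/
def Zlat : Set ℂ := {z | ∃ a b : ℤ, z = (a : ℂ) + (b : ℂ) * zeta}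

/-- The set of admissible steps `{1, ζ, ζ²}`. -/
def steps : Set ℂ := {1, zeta, zeta ^ 2}

/-- The set `P = {0, 1, 1 + ζ}`. -/
def Pset : Set ℂ := {0, 1, 1 + zeta}

/-- Graph distance from the set `P` in `ℤ[ζ]`: the least `n` such that
`z = p + w₁ + ⋯ + w_n` with `p ∈ P` and each `wᵢ ∈ {1, ζ, ζ²}`. -/
def gdist (z : ℂ) : ℕ :=
  sInf {n : ℕ | ∃ p ∈ Pset, ∃ w : Fin n → ℂ, (∀ i, w i ∈ steps) ∧ z = p + ∑ i, w i}

def A1 : Set ℂ := {z | ∃ k1 k2 : ℤ, z = (k1 : ℂ) + (k2 : ℂ) * zeta ^ 2 ∧ 1 < k2 + 1 ∧ k2 + 1 < k1}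
def A2 : Set ℂ := {z | ∃ k1 k2 : ℤ, z = -(k1 : ℂ) * zeta - (k2 : ℂ) ∧ 0 ≤ k2 ∧ k2 < k1}
def A3 : Set ℂ := {z | ∃ k1 k2 : ℤ, z = -(k1 : ℂ) - (k2 : ℂ) * zeta ∧ 0 < k2 ∧ k2 < k1}
def A4 : Set ℂ := {z | ∃ k1 k2 : ℤ, z = (k1 : ℂ) * zeta + (k2 : ℂ) * zeta ^ 2 ∧ 0 ≤ k2 ∧ k2 < k1}
def A5 : Set ℂ := {z | ∃ k1 k2 : ℤ, z = -(k1 : ℂ) * zeta ^ 2 - (k2 : ℂ) ∧ 1 < k2 + 1 ∧ k2 + 1 < k1}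
def A6 : Set ℂ := {z | ∃ k1 k2 : ℤ, z = (k1 : ℂ) + (k2 : ℂ) * zeta ∧ 0 < k2 ∧ k2 < k1}

def B1 : Set ℂ := {z | ∃ n : ℤ, z = (n : ℂ) ∧ 2 ≤ n}
def B2 : Set ℂ := {z | ∃ n : ℤ, z = (n : ℂ) * zeta - zeta ^ 2 ∧ 1 ≤ n}
def B3 : Set ℂ := {z | ∃ n : ℤ, z = (n : ℂ) * zeta ^ 2 ∧ 1 ≤ n}
def B4 : Set ℂ := {z | ∃ n : ℤ, z = (n : ℂ) ∧ n ≤ -1}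
def B5 : Set ℂ := {z | ∃ n : ℤ, z = 1 + (n : ℂ) * zeta ∧ n ≤ -1}
def B6 : Set ℂ := {z | ∃ n : ℤ, z = (n : ℂ) * zeta ^ 2 ∧ n ≤ -2}

/-- The closure `Ā₁ = A₁ ∪ B₁ ∪ B₅ ∪ {1}`. -/
def Abar1 : Set ℂ := A1 ∪ B1 ∪ B5 ∪ {1}
/-- The closure `Ā₃ = A₃ ∪ B₃ ∪ B₄ ∪ {0}`. -/
def Abar3 : Set ℂ := A3 ∪ B3 ∪ B4 ∪ {0}
/-- The closure `Ā₅ = A₅ ∪ B₂ ∪ B₆ ∪ {1+ζ}`. -/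
def Abar5 : Set ℂ := A5 ∪ B2 ∪ B6 ∪ {1 + zeta}

/-- `φ(z) = 1_{Ā₁}(z) + ζ·1_{Ā₃}(z) + ζ²·1_{Ā₅}(z)`. -/
def phi (z : ℂ) : ℂ :=
  Abar1.indicator 1 z + zeta * Abar3.indicator 1 z + zeta ^ 2 * Abar5.indicator 1 z

/-- `ψ(z) = 1_{A₆}(z) + ζ·1_{A₄}(z) + ζ²·1_{A₂}(z)`. -/
def psi (z : ℂ) : ℂ :=
  A6.indicator 1 z + zeta * A4.indicator 1 z + zeta ^ 2 * A2.indicator 1 z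

variable {Ω : Type*} {mΩ : MeasurableSpace Ω}

/-- A Parisian walk: an adapted integrable martingale starting in `ℤ[ζ]` a.s.,
with increments in `{1, ζ, ζ²}` a.s. -/
def IsParisian (μ : Measure Ω) (ℱ : Filtration ℕ mΩ) (Z : ℕ → Ω → ℂ) : Prop :=
  Martingale Z ℱ μ ∧ (∀ᵐ ω ∂μ, Z 0 ω ∈ Zlat) ∧
    ∀ t : ℕ, ∀ᵐ ω ∂μ, Z (t + 1) ω - Z t ω ∈ steps

/-- The local time of a walk: the number of exits from `Ā₁`, `Ā₃`, `Ā₅` before time `t`. -/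
def localTime (Z : ℕ → Ω → ℂ) (t : ℕ) (ω : Ω) : ℕ :=
  ∑ u ∈ Finset.range t,
    ((if Z u ω ∈ Abar1 ∧ Z (u + 1) ω ∉ Abar1 then 1 else 0) +
     (if Z u ω ∈ Abar3 ∧ Z (u + 1) ω ∉ Abar3 then 1 else 0) +
     (if Z u ω ∈ Abar5 ∧ Z (u + 1) ω ∉ Abar5 then 1 else 0))

/-- `ΔZ_S = ∏_{i : sᵢ = ζ} ΔZᵢ · ∏_{i : sᵢ = ζ²} conj(ΔZᵢ)` where `ΔZᵢ = Zᵢ − Z_{i−1}`,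
for a tuple `S : Fin t → ℂ` (with entries in `{1, ζ, ζ²}`). -/
def deltaZS (Z : ℕ → Ω → ℂ) (t : ℕ) (S : Fin t → ℂ) (ω : Ω) : ℂ :=
  ∏ i : Fin t,
    (if S i = zeta then Z ((i : ℕ) + 1) ω - Z (i : ℕ) ω
     else if S i = zeta ^ 2 then starRingEnd ℂ (Z ((i : ℕ) + 1) ω - Z (i : ℕ) ω)
     else 1)

end Parisian

namespace Parisian

lemma zeta_sq : zeta ^ 2 = -1 - zeta := by
  have h3 : ((Real.sqrt 3 : ℝ) : ℂ) ^ 2 = 3 := by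
    norm_cast
    exact Real.sq_sqrt (by norm_num)
  unfold zeta
  field_simp
  ring_nf
  rw [Complex.I_sq, h3]
  ring

lemma zeta_im : zeta.im = Real.sqrt 3 / 2 := by
  have h : zeta = Complex.ofReal (-(1/2)) + Complex.ofReal (Real.sqrt 3 / 2) * Complex.I := by
    unfold zeta; push_cast; ring
  rw [h]; simp

lemma coord {a b a' b' : ℤ} (h : (a:ℂ) + b * zeta = (a':ℂ) + b' * zeta) : a = a' ∧ b = b' := by
  have him := congrArg Complex.im h
  simp only [Complex.add_im, Complex.mul_im, Complex.intCast_im, Complex.intCast_re, zeta_im,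
    zero_add, add_zero, zero_mul, mul_zero] at him
  have hs : Real.sqrt 3 ≠ 0 := by positivity
  have hb' : b = b' := by
    field_simp at him
    exact_mod_cast him
  subst hb'
  have ha : (a:ℂ) = a' := by linear_combination h
  exact ⟨by exact_mod_cast ha, rfl⟩

/-- Coordinate conditions for the thirteen sets. -/
def C : ℕ → ℤ → ℤ → Prop
  | 0, a, b => (a = 0 ∧ b = 0) ∨ (a = 1 ∧ b = 0) ∨ (a = 1 ∧ b = 1)
  | 1, a, b => 2 ≤ a ∧ b ≤ -1
  | 2, a, b => a ≤ 0 ∧ b < a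
  | 3, a, b => b ≤ -1 ∧ a < b
  | 4, a, b => a ≤ 0 ∧ 1 ≤ b
  | 5, a, b => 2 ≤ a ∧ a < b
  | 6, a, b => 1 ≤ b ∧ b < a
  | 7, a, b => b = 0 ∧ 2 ≤ a
  | 8, a, b => a = 1 ∧ 2 ≤ b
  | 9, a, b => a = b ∧ a ≤ -1
  | 10, a, b => b = 0 ∧ a ≤ -1
  | 11, a, b => a = 1 ∧ b ≤ -1
  | 12, a, b => a = b ∧ 2 ≤ a
  | _, _, _ => False

lemma mem_P (z : ℂ) : z ∈ Pset ↔ ∃ a b : ℤ, z = (a:ℂ) + b * zeta ∧ C 0 a b := by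
  constructor
  · rintro (rfl | rfl | rfl)
    · exact ⟨0, 0, by push_cast; ring, Or.inl ⟨rfl, rfl⟩⟩
    · exact ⟨1, 0, by push_cast; ring, Or.inr (Or.inl ⟨rfl, rfl⟩)⟩
    · exact ⟨1, 1, by push_cast; ring, Or.inr (Or.inr ⟨rfl, rfl⟩)⟩
  · rintro ⟨a, b, rfl, (⟨rfl, rfl⟩ | ⟨rfl, rfl⟩ | ⟨rfl, rfl⟩)⟩
    · left; push_cast; ring
    · right; left; push_cast; ring
    · right; right; rw [Set.mem_singleton_iff]; push_cast; ring

lemma mem_A1 (z : ℂ) : z ∈ A1 ↔ ∃ a b : ℤ, z = (a:ℂ) + b * zeta ∧ C 1 a b := by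
  constructor
  · rintro ⟨k1, k2, rfl, h1, h2⟩
    exact ⟨k1 - k2, -k2, by push_cast; rw [zeta_sq]; ring, by omega, by omega⟩
  · rintro ⟨a, b, rfl, h1, h2⟩
    exact ⟨a - b, -b, by push_cast; rw [zeta_sq]; ring, by omega, by omega⟩

lemma mem_A2 (z : ℂ) : z ∈ A2 ↔ ∃ a b : ℤ, z = (a:ℂ) + b * zeta ∧ C 2 a b := by
  constructor
  · rintro ⟨k1, k2, rfl, h1, h2⟩
    exact ⟨-k2, -k1, by push_cast; ring, by omega, by omega⟩
  · rintro ⟨a, b, rfl, h1, h2⟩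
    exact ⟨-b, -a, by push_cast; ring, by omega, by omega⟩

lemma mem_A3 (z : ℂ) : z ∈ A3 ↔ ∃ a b : ℤ, z = (a:ℂ) + b * zeta ∧ C 3 a b := by
  constructor
  · rintro ⟨k1, k2, rfl, h1, h2⟩
    exact ⟨-k1, -k2, by push_cast; ring, by omega, by omega⟩
  · rintro ⟨a, b, rfl, h1, h2⟩
    exact ⟨-a, -b, by push_cast; ring, by omega, by omega⟩

lemma mem_A4 (z : ℂ) : z ∈ A4 ↔ ∃ a b : ℤ, z = (a:ℂ) + b * zeta ∧ C 4 a b := by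
  constructor
  · rintro ⟨k1, k2, rfl, h1, h2⟩
    exact ⟨-k2, k1 - k2, by push_cast; rw [zeta_sq]; ring, by omega, by omega⟩
  · rintro ⟨a, b, rfl, h1, h2⟩
    exact ⟨b - a, -a, by push_cast; rw [zeta_sq]; ring, by omega, by omega⟩

lemma mem_A5 (z : ℂ) : z ∈ A5 ↔ ∃ a b : ℤ, z = (a:ℂ) + b * zeta ∧ C 5 a b := by
  constructor
  · rintro ⟨k1, k2, rfl, h1, h2⟩
    exact ⟨k1 - k2, k1, by push_cast; rw [zeta_sq]; ring, by omega, by omega⟩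
  · rintro ⟨a, b, rfl, h1, h2⟩
    exact ⟨b, b - a, by push_cast; rw [zeta_sq]; ring, by omega, by omega⟩

lemma mem_A6 (z : ℂ) : z ∈ A6 ↔ ∃ a b : ℤ, z = (a:ℂ) + b * zeta ∧ C 6 a b := by
  constructor
  · rintro ⟨k1, k2, rfl, h1, h2⟩
    exact ⟨k1, k2, rfl, by omega, by omega⟩
  · rintro ⟨a, b, rfl, h1, h2⟩
    exact ⟨a, b, rfl, by omega, by omega⟩

lemma mem_B1 (z : ℂ) : z ∈ B1 ↔ ∃ a b : ℤ, z = (a:ℂ) + b * zeta ∧ C 7 a b := by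
  constructor
  · rintro ⟨n, rfl, h⟩
    exact ⟨n, 0, by push_cast; ring, rfl, h⟩
  · rintro ⟨a, b, rfl, rfl, h⟩
    exact ⟨a, by push_cast; ring, h⟩

lemma mem_B2 (z : ℂ) : z ∈ B2 ↔ ∃ a b : ℤ, z = (a:ℂ) + b * zeta ∧ C 8 a b := by
  constructor
  · rintro ⟨n, rfl, h⟩
    exact ⟨1, n + 1, by push_cast; rw [zeta_sq]; ring, rfl, by omega⟩
  · rintro ⟨a, b, rfl, rfl, h⟩
    exact ⟨b - 1, by push_cast; rw [zeta_sq]; ring, by omega⟩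

lemma mem_B3 (z : ℂ) : z ∈ B3 ↔ ∃ a b : ℤ, z = (a:ℂ) + b * zeta ∧ C 9 a b := by
  constructor
  · rintro ⟨n, rfl, h⟩
    exact ⟨-n, -n, by push_cast; rw [zeta_sq]; ring, rfl, by omega⟩
  · rintro ⟨a, b, rfl, h1, h2⟩
    refine ⟨-a, by push_cast; rw [zeta_sq]; ring_nf; rw [h1], by omega⟩

lemma mem_B4 (z : ℂ) : z ∈ B4 ↔ ∃ a b : ℤ, z = (a:ℂ) + b * zeta ∧ C 10 a b := by
  constructor
  · rintro ⟨n, rfl, h⟩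
    exact ⟨n, 0, by push_cast; ring, rfl, h⟩
  · rintro ⟨a, b, rfl, rfl, h⟩
    exact ⟨a, by push_cast; ring, h⟩

lemma mem_B5 (z : ℂ) : z ∈ B5 ↔ ∃ a b : ℤ, z = (a:ℂ) + b * zeta ∧ C 11 a b := by
  constructor
  · rintro ⟨n, rfl, h⟩
    exact ⟨1, n, by push_cast; ring, rfl, h⟩
  · rintro ⟨a, b, rfl, rfl, h⟩
    exact ⟨b, by push_cast; ring, h⟩

lemma mem_B6 (z : ℂ) : z ∈ B6 ↔ ∃ a b : ℤ, z = (a:ℂ) + b * zeta ∧ C 12 a b := by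
  constructor
  · rintro ⟨n, rfl, h⟩
    exact ⟨-n, -n, by push_cast; rw [zeta_sq]; ring, rfl, by omega⟩
  · rintro ⟨a, b, rfl, h1, h2⟩
    refine ⟨-a, by push_cast; rw [zeta_sq]; ring_nf; rw [h1], by omega⟩

lemma memF (i : Fin 13) (z : ℂ) :
    z ∈ (![Pset, A1, A2, A3, A4, A5, A6, B1, B2, B3, B4, B5, B6] : Fin 13 → Set ℂ) i ↔
      ∃ a b : ℤ, z = (a:ℂ) + b * zeta ∧ C i.val a b := by
  fin_cases i
  exacts [mem_P z, mem_A1 z, mem_A2 z, mem_A3 z, mem_A4 z, mem_A5 z, mem_A6 z,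
    mem_B1 z, mem_B2 z, mem_B3 z, mem_B4 z, mem_B5 z, mem_B6 z]

lemma C_inj {m n : ℕ} {a b : ℤ} (hm : m < 13) (hn : n < 13)
    (h1 : C m a b) (h2 : C n a b) : m = n := by
  interval_cases m <;> interval_cases n <;> simp only [C] at h1 h2 <;> omega

lemma C_total (a b : ℤ) : ∃ i : Fin 13, C i.val a b := by
  have H : C 0 a b ∨ C 1 a b ∨ C 2 a b ∨ C 3 a b ∨ C 4 a b ∨ C 5 a b ∨ C 6 a b ∨
      C 7 a b ∨ C 8 a b ∨ C 9 a b ∨ C 10 a b ∨ C 11 a b ∨ C 12 a b := by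
    simp only [C]; omega
  rcases H with h|h|h|h|h|h|h|h|h|h|h|h|h
  exacts [⟨0, h⟩, ⟨1, h⟩, ⟨2, h⟩, ⟨3, h⟩, ⟨4, h⟩, ⟨5, h⟩, ⟨6, h⟩, ⟨7, h⟩, ⟨8, h⟩, ⟨9, h⟩,
    ⟨10, h⟩, ⟨11, h⟩, ⟨12, h⟩]

/-- **Classification of lattice points**: the thirteen sets
`P, A₁, …, A₆, B₁, …, B₆` are pairwise disjoint and their union is `ℤ[ζ]`. -/
theorem classification_of_lattice_points
    (F : Fin 13 → Set ℂ)
    (hF : F = ![Pset, A1, A2, A3, A4, A5, A6, B1, B2, B3, B4, B5, B6]) :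
    Pairwise (Function.onFun Disjoint F) ∧ (⋃ i, F i) = Zlat := by
  subst hF
  constructor
  · intro i j hij
    rw [Function.onFun, Set.disjoint_left]
    intro z hzi hzj
    obtain ⟨a, b, rfl, hCi⟩ := (memF i z).mp hzi
    obtain ⟨a', b', hab, hCj⟩ := (memF j _).mp hzj
    obtain ⟨rfl, rfl⟩ := coord hab
    exact hij (Fin.ext (C_inj i.isLt j.isLt hCi hCj))
  · ext z
    simp only [Set.mem_iUnion]
    constructor
    · rintro ⟨i, hi⟩
      obtain ⟨a, b, rfl, -⟩ := (memF i z).mp hi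
      exact ⟨a, b, rfl⟩
    · rintro ⟨a, b, rfl⟩
      obtain ⟨i, hC⟩ := C_total a b
      exact ⟨i, (memF i _).mpr ⟨a, b, rfl, hC⟩⟩

end Parisian
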